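/- arXiv:1807.03276 — 2 statements merged into one kernel-verified Lean document; each statement's English description precedes it below -/
import Mathlib

section
/- Let n ≥ 2, θ ∈ ℝ, and let u be a twice continuously differentiable function on 𝔹. Then on 𝔹 one has L_θ[M^{1+2θ}[u]] = M^{1+2θ}[L_{-θ-1}[u]]. -/
open MeasureTheory
open scoped BigOperators ENNReal Classical

noncomputable section

/-- Euclidean space `ℝⁿ`. -/
abbrev E (n : ℕ) := EuclideanSpace ℝ (Fin n)

/-- The open unit ball of `ℝⁿ`. -/
def unitBall (n : ℕ) : Set (E n) := Metric.ball 0 1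

/-- The Laplacian `Δf = ∑ ∂²f/∂xᵢ²`. -/
def lap {n : ℕ} (f : E n → ℂ) (x : E n) : ℂ :=
  ∑ i : Fin n,
    fderiv ℝ (fun y => fderiv ℝ f y (EuclideanSpace.single i 1)) x (EuclideanSpace.single i 1)

/-- The `N`-th iterate `Δ^N` of the Laplacian. -/
def lapIter {n : ℕ} (N : ℕ) (f : E n → ℂ) : E n → ℂ := lap^[N] f

/-- The radial derivative `R[u](x) = x ⋅ ∇u(x)`. -/
def radialDeriv {n : ℕ} (f : E n → ℂ) (x : E n) : ℂ := fderiv ℝ f x x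

/-- The operator `L_θ[u] = (1-|x|²) Δu + 4θ R[u] + 2θ(n-2-2θ) u`. -/
def Lop {n : ℕ} (θ : ℝ) (f : E n → ℂ) (x : E n) : ℂ :=
  ((1 - ‖x‖ ^ 2 : ℝ) : ℂ) * lap f x + ((4 * θ : ℝ) : ℂ) * radialDeriv f x
    + ((2 * θ * ((n : ℝ) - 2 - 2 * θ) : ℝ) : ℂ) * f x

/-- The multiplication operator `M^j[u](x) = (1-|x|²)^j u(x)` for integer `j`. -/
def Mnat {n : ℕ} (j : ℕ) (f : E n → ℂ) (x : E n) : ℂ :=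
  (((1 - ‖x‖ ^ 2) ^ j : ℝ) : ℂ) * f x

/-- The multiplication operator `M^λ[u](x) = (1-|x|²)^λ u(x)` for real `λ`. -/
def Mr {n : ℕ} (lam : ℝ) (f : E n → ℂ) (x : E n) : ℂ :=
  (((1 - ‖x‖ ^ 2) ^ lam : ℝ) : ℂ) * f x

/-- `u` is `N`-harmonic on the unit ball: `u` is `C^{2N}` there and `Δ^N u = 0`. -/
def NHarm (n N : ℕ) (u : E n → ℂ) : Prop :=
  ContDiffOn ℝ (2 * N : ℕ) u (unitBall n) ∧ ∀ x ∈ unitBall n, lapIter N u x = 0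

/-- `‖u‖_{p,α}^p = ∫_𝔹 |u|^p (1-|x|²)^α dV`, as a lower integral. -/
def wInt (n : ℕ) (p α : ℝ) (u : E n → ℂ) : ℝ≥0∞ :=
  ∫⁻ x in unitBall n, ENNReal.ofReal (‖u x‖ ^ p * (1 - ‖x‖ ^ 2) ^ α)

/-- Membership in `PH^p_{N,α}(𝔹)`. -/
def memPH (n N : ℕ) (p α : ℝ) (u : E n → ℂ) : Prop :=
  NHarm n N u ∧ wInt n p α u < ⊤

/-- The quantities `b_{j,N}(p)`. -/
def bCoef (n N j : ℕ) (p : ℝ) : ℝ :=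
  if j = 0 then -1 - ((N : ℝ) - 1) * p
  else max (-1 - ((N : ℝ) + (j : ℝ) - 1) * p) (-(n : ℝ) - ((N : ℝ) - (j : ℝ) - (n : ℝ) + 1) * p)

/-- The quantities `a_{j,N}(p)`. -/
def aCoef (n N j : ℕ) (p : ℝ) : ℝ :=
  min (bCoef n N j p) (-1 - ((N : ℝ) - (j : ℝ)) * p)

end

/-!
The product rule gives `∂ᵥ M^λ[u] = M^λ[∂ᵥ u] - 2λ⟪x, v⟫ M^{λ-1}[u]`.
The right-hand side has the same shape, so applying the rule once more expresses `Δ M^λ[u]`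
and `R M^λ[u]` through `M^λ`, `M^{λ-1}`, `M^{λ-2}` applied to `Δu`, `Ru` and `u`.
For `λ = 1 + 2θ` the `‖x‖²`-terms of `L_θ[M^λ[u]]` cancel, since `4λ(λ - 1) = 8θλ`,
and what remains is `M^λ[L_{-θ-1}[u]]`.
-/

open scoped RealInnerProductSpace Topology

section WeightedMultiplier

variable {n : ℕ}

lemma one_sub_norm_sq_pos {x : E n} (hx : ‖x‖ < 1) : 0 < 1 - ‖x‖ ^ 2 := by
  nlinarith [norm_nonneg x]

lemma hasFDerivAt_Mr (lam : ℝ) {u : E n → ℂ} {x : E n} (hx : ‖x‖ < 1)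
    (hu : DifferentiableAt ℝ u x) :
    HasFDerivAt (Mr lam u)
      ((((1 - ‖x‖ ^ 2) ^ lam : ℝ) : ℂ) • fderiv ℝ u x
        + u x • Complex.ofRealCLM ∘L ((-2 * lam * (1 - ‖x‖ ^ 2) ^ (lam - 1)) • innerSL ℝ x)) x := by
  have hw : HasFDerivAt (fun y : E n => (1 - ‖y‖ ^ 2) ^ lam)
      ((-2 * lam * (1 - ‖x‖ ^ 2) ^ (lam - 1)) • innerSL ℝ x) x := by
    refine (((hasFDerivAt_id x).norm_sq.const_sub 1).rpow_const (p := lam)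
      (Or.inl (one_sub_norm_sq_pos hx).ne')).congr_fderiv ?_
    ext v
    simp only [id_eq, ContinuousLinearMap.comp_id, smul_neg, neg_apply, smul_apply, coe_innerSL_apply,
      nsmul_eq_mul, Nat.cast_ofNat, smul_eq_mul]
    ring
  exact (Complex.ofRealCLM.hasFDerivAt.comp x hw).mul hu.hasFDerivAt

lemma fderiv_Mr_apply (lam : ℝ) {u : E n → ℂ} {x : E n} (hx : ‖x‖ < 1)
    (hu : DifferentiableAt ℝ u x) (v : E n) :
    fderiv ℝ (Mr lam u) x v = Mr lam (fun y => fderiv ℝ u y v) x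
      - ((2 * lam * ⟪x, v⟫ : ℝ) : ℂ) * Mr (lam - 1) u x := by
  rw [(hasFDerivAt_Mr lam hx hu).fderiv]
  simp only [Mr, add_apply, smul_apply, smul_eq_mul, ContinuousLinearMap.comp_apply,
    innerSL_apply_apply, Complex.ofRealCLM_apply, Complex.ofReal_mul, Complex.ofReal_neg,
    Complex.ofReal_ofNat]
  ring

lemma fderiv_fderiv_Mr_apply (lam : ℝ) {u : E n → ℂ} {x : E n} (hx : ‖x‖ < 1)
    (hu : ContDiffAt ℝ 2 u x) (v : E n) :
    fderiv ℝ (fun y => fderiv ℝ (Mr lam u) y v) x v =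
      Mr lam (fun y => fderiv ℝ (fun z => fderiv ℝ u z v) y v) x
        - ((4 * lam * ⟪x, v⟫ : ℝ) : ℂ) * Mr (lam - 1) (fun y => fderiv ℝ u y v) x
        - ((2 * lam * ‖v‖ ^ 2 : ℝ) : ℂ) * Mr (lam - 1) u x
        + ((4 * lam * (lam - 1) * ⟪x, v⟫ ^ 2 : ℝ) : ℂ) * Mr (lam - 2) u x := by
  have hnear : ∀ᶠ y in 𝓝 x, ‖y‖ < 1 ∧ DifferentiableAt ℝ u y := by
    filter_upwards [isOpen_lt continuous_norm continuous_const |>.mem_nhds hx,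
      hu.eventually (by simp)] with y hy hu'
    exact ⟨hy, hu'.differentiableAt (by norm_num)⟩
  have hloc : (fun y => fderiv ℝ (Mr lam u) y v) =ᶠ[𝓝 x] fun y =>
      Mr lam (fun z => fderiv ℝ u z v) y - ((2 * lam * ⟪y, v⟫ : ℝ) : ℂ) * Mr (lam - 1) u y := by
    filter_upwards [hnear] with y hy
    exact fderiv_Mr_apply lam hy.1 hy.2 v
  have hDu : DifferentiableAt ℝ (fun z => fderiv ℝ u z v) x :=
    ((hu.fderiv_right (m := 1) le_rfl).differentiableAt one_ne_zero).clm_apply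
      (differentiableAt_const v)
  have hcoef : HasFDerivAt (fun y : E n => ((2 * lam * ⟪y, v⟫ : ℝ) : ℂ))
      (Complex.ofRealCLM ∘L ((2 * lam) • innerSL ℝ v)) x := by
    have h := Complex.ofRealCLM.hasFDerivAt.comp x ((innerSL ℝ v).hasFDerivAt.const_mul (2 * lam))
    refine h.congr_of_eventuallyEq (.of_forall fun y => ?_)
    simp [real_inner_comm v y]
  rw [hloc.fderiv_eq, ((hasFDerivAt_Mr lam hx hDu).fun_sub
    (hcoef.fun_mul (hasFDerivAt_Mr (lam - 1) hx hnear.self_of_nhds.2))).fderiv]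
  simp only [Mr, sub_apply, add_apply, smul_apply, smul_eq_mul, ContinuousLinearMap.comp_apply,
    innerSL_apply_apply, Complex.ofRealCLM_apply, Complex.ofReal_mul, Complex.ofReal_sub,
    Complex.ofReal_one, Complex.ofReal_neg, Complex.ofReal_ofNat, Complex.ofReal_pow, real_inner_self_eq_norm_sq, show lam - 1 - 1 = lam - 2 by ring]
  ring

lemma radialDeriv_Mr (lam : ℝ) {u : E n → ℂ} {x : E n} (hx : ‖x‖ < 1)
    (hu : DifferentiableAt ℝ u x) :
    radialDeriv (Mr lam u) x =
      Mr lam (radialDeriv u) x - ((2 * lam * ‖x‖ ^ 2 : ℝ) : ℂ) * Mr (lam - 1) u x := by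
  rw [radialDeriv, fderiv_Mr_apply lam hx hu, real_inner_self_eq_norm_sq]
  rfl

lemma continuousLinearMap_apply_eq_sum (L : E n →L[ℝ] ℂ) (y : E n) :
    L y = ∑ i, (y i : ℂ) * L (EuclideanSpace.single i 1) := by
  conv_lhs => rw [← (EuclideanSpace.basisFun (Fin n) ℝ).sum_repr y]
  simp [map_sum, Complex.real_smul]

lemma lap_Mr (lam : ℝ) {u : E n → ℂ} {x : E n} (hx : ‖x‖ < 1) (hu : ContDiffAt ℝ 2 u x) :
    lap (Mr lam u) x = Mr lam (lap u) x
      - ((4 * lam : ℝ) : ℂ) * Mr (lam - 1) (radialDeriv u) x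
      - ((2 * n * lam : ℝ) : ℂ) * Mr (lam - 1) u x
      + ((4 * lam * (lam - 1) * ‖x‖ ^ 2 : ℝ) : ℂ) * Mr (lam - 2) u x := by
  have hconst : ((2 * n * lam : ℝ) : ℂ) * Mr (lam - 1) u x
      = ∑ _i : Fin n, ((2 * lam : ℝ) : ℂ) * Mr (lam - 1) u x := by
    simp only [Finset.sum_const, Finset.card_univ, Fintype.card_fin, nsmul_eq_mul]
    push_cast
    ring
  have hnorm : (‖x‖ : ℂ) ^ 2 = ∑ i, (x i : ℂ) ^ 2 := by
    exact_mod_cast EuclideanSpace.real_norm_sq_eq x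
  rw [hconst]
  simp only [Mr, lap, radialDeriv, fderiv_fderiv_Mr_apply lam hx hu,
    EuclideanSpace.inner_single_right, PiLp.norm_single, conj_trivial, norm_one, one_pow, mul_one]
  rw [continuousLinearMap_apply_eq_sum (fderiv ℝ u x) x]
  push_cast
  rw [hnorm]
  simp only [Finset.mul_sum, Finset.sum_mul, ← Finset.sum_sub_distrib, ← Finset.sum_add_distrib]
  exact Finset.sum_congr rfl fun i _ => by ring

end WeightedMultiplier

theorem stmt5_general (n : ℕ) (θ : ℝ) (u : E n → ℂ)
    (hu : ContDiffOn ℝ 2 u (unitBall n)) :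
    ∀ x ∈ unitBall n,
      Lop θ (Mr (1 + 2 * θ) u) x = Mr (1 + 2 * θ) (Lop (-θ - 1) u) x := by
  intro x hx
  have hx1 : ‖x‖ < 1 := mem_ball_zero_iff.mp hx
  have hux : ContDiffAt ℝ 2 u x := hu.contDiffAt (Metric.isOpen_ball.mem_nhds hx)
  have ht : 1 - ‖x‖ ^ 2 ≠ 0 := (one_sub_norm_sq_pos hx1).ne'
  have h1 : (1 - ‖x‖ ^ 2) ^ (1 + 2 * θ - 1) = (1 - ‖x‖ ^ 2) ^ (1 + 2 * θ - 2) * (1 - ‖x‖ ^ 2) := by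
    rw [← Real.rpow_add_one ht]
    ring_nf
  have h0 : (1 - ‖x‖ ^ 2) ^ (1 + 2 * θ) = (1 - ‖x‖ ^ 2) ^ (1 + 2 * θ - 1) * (1 - ‖x‖ ^ 2) := by
    rw [← Real.rpow_add_one ht]
    ring_nf
  simp only [Lop, lap_Mr _ hx1 hux, radialDeriv_Mr _ hx1 (hux.differentiableAt two_ne_zero), Mr]
  rw [h0, h1]
  push_cast
  ring

/-- `L_θ M^{1+2θ} = M^{1+2θ} L_{-θ-1}`. -/
theorem stmt5 (n : ℕ) (hn : 2 ≤ n) (θ : ℝ) (u : E n → ℂ)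
    (hu : ContDiffOn ℝ 2 u (unitBall n)) :
    ∀ x ∈ unitBall n,
      Lop θ (Mr (1 + 2 * θ) u) x = Mr (1 + 2 * θ) (Lop (-θ - 1) u) x :=
  stmt5_general n θ u hu
end

section
/- Let n ≥ 2 and θ ∈ ℝ. For every four times continuously differentiable function u on 𝔹, Δ(L_θ[u]) = L_{θ-1}[Δu] on 𝔹. More generally, for every j ∈ ℕ (j ≥ 1) and every (2j+2)-times continuously differentiable u on 𝔹, Δ^j(L_θ[u]) = L_{θ-j}[Δ^j u] on 𝔹. -/
open MeasureTheory
open scoped BigOperators ENNReal Classical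

/-!
Write `L_θ u = ψ Δu + 4θ R u + 2θ(n-2-2θ) u` with `ψ = 1 - |x|²`. Since `∇ψ = -2x` and
`Δψ = -2n`, the Leibniz rule gives `Δ(ψ v) = ψ Δv - 4 R v - 2n v`; since `[∂_v, R] = ∂_v`,
`Δ R = R Δ + 2 Δ`. Collecting terms, `Δ L_θ = L_{θ-1} Δ`. The Laplacian is local, so on an open
set the identity can be iterated, giving `Δ^j L_θ = L_{θ-j} Δ^j`.
-/

open Filter Topology InnerProductSpace Laplacian

section SecondDerivative

variable {F G : Type*} [NormedAddCommGroup F] [NormedSpace ℝ F]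
  [NormedAddCommGroup G] [NormedSpace ℝ G] {f : F → G} {x : F}

theorem fderiv_fderiv_apply (hf : DifferentiableAt ℝ (fderiv ℝ f) x) (v w : F) :
    fderiv ℝ (fun y => fderiv ℝ f y v) x w = fderiv ℝ (fderiv ℝ f) x w v := by
  simp [fderiv_clm_apply hf (differentiableAt_const v)]

theorem ContDiffAt.differentiableAt_fderiv (hf : ContDiffAt ℝ 2 f x) :
    DifferentiableAt ℝ (fderiv ℝ f) x :=
  (hf.fderiv_right (m := 1) (by norm_num)).differentiableAt one_ne_zero

theorem ContDiffAt.fderiv_apply {m k : WithTop ℕ∞} (hf : ContDiffAt ℝ k f x) (hmk : m + 1 ≤ k)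
    (v : F) : ContDiffAt ℝ m (fun y => fderiv ℝ f y v) x :=
  (hf.fderiv_right hmk).clm_apply contDiffAt_const

theorem fderiv_fderiv_mul_apply {𝔸 : Type*} [NormedCommRing 𝔸] [NormedAlgebra ℝ 𝔸]
    {f g : F → 𝔸} (hf : ContDiffAt ℝ 2 f x) (hg : ContDiffAt ℝ 2 g x) (v : F) :
    fderiv ℝ (fun y => fderiv ℝ (fun z => f z * g z) y v) x v =
      f x * fderiv ℝ (fun y => fderiv ℝ g y v) x v + 2 * (fderiv ℝ f x v * fderiv ℝ g x v)
        + g x * fderiv ℝ (fun y => fderiv ℝ f y v) x v := by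
  have hfg : (fun y => fderiv ℝ (fun z => f z * g z) y v) =ᶠ[𝓝 x]
      fun y => f y * fderiv ℝ g y v + g y * fderiv ℝ f y v := by
    filter_upwards [hf.eventually (by simp), hg.eventually (by simp)] with y hfy hgy
    simp [fderiv_fun_mul (hfy.differentiableAt two_ne_zero) (hgy.differentiableAt two_ne_zero)]
  have hf₁ := hf.differentiableAt two_ne_zero
  have hg₁ := hg.differentiableAt two_ne_zero
  have hf₂ := (hf.fderiv_apply (m := 1) (by norm_num) v).differentiableAt one_ne_zero
  have hg₂ := (hg.fderiv_apply (m := 1) (by norm_num) v).differentiableAt one_ne_zero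
  rw [hfg.fderiv_eq, fderiv_fun_add (hf₁.fun_mul hg₂) (hg₁.fun_mul hf₂), add_apply,
    fderiv_fun_mul hf₁ hg₂, fderiv_fun_mul hg₁ hf₂]
  simp only [add_apply, smul_apply, smul_eq_mul]
  ring

end SecondDerivative

section UnitBallWeight

variable {F : Type*} [NormedAddCommGroup F] [InnerProductSpace ℝ F]

theorem hasFDerivAt_one_sub_norm_sq (x : F) :
    HasFDerivAt (fun y : F => ((1 - ‖y‖ ^ 2 : ℝ) : ℂ))
      (Complex.ofRealCLM.comp (-(2 • innerSL ℝ x))) x :=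
  Complex.ofRealCLM.hasFDerivAt.comp x ((hasStrictFDerivAt_norm_sq x).hasFDerivAt.const_sub 1)

theorem fderiv_one_sub_norm_sq_apply (x v : F) :
    fderiv ℝ (fun y : F => ((1 - ‖y‖ ^ 2 : ℝ) : ℂ)) x v = -2 * ((inner ℝ v x : ℝ) : ℂ) := by
  rw [(hasFDerivAt_one_sub_norm_sq x).fderiv]
  simp [real_inner_comm]

end UnitBallWeight

section EuclideanLaplacian

variable {n : ℕ} {f g : E n → ℂ} {x : E n}

theorem lap_eq_laplacian (hf : DifferentiableAt ℝ (fderiv ℝ f) x) : lap f x = Δ f x := by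
  simp [lap, laplacian_eq_iteratedFDeriv_orthonormalBasis f (EuclideanSpace.basisFun (Fin n) ℝ),
    iteratedFDeriv_two_apply, fderiv_fderiv_apply hf]

theorem lap_congr_nhds (h : f =ᶠ[𝓝 x] g) : lap f x = lap g x := by
  refine Finset.sum_congr rfl fun i _ => ?_
  have h' : (fun y => fderiv ℝ f y (EuclideanSpace.single i 1)) =ᶠ[𝓝 x]
      fun y => fderiv ℝ g y (EuclideanSpace.single i 1) := by
    filter_upwards [h.fderiv (𝕜 := ℝ)] with y hy
    rw [hy]
  rw [h'.fderiv_eq]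

theorem lap_add (hf : ContDiffAt ℝ 2 f x) (hg : ContDiffAt ℝ 2 g x) :
    lap (fun y => f y + g y) x = lap f x + lap g x := by
  rw [lap_eq_laplacian (hf.add hg).differentiableAt_fderiv,
    lap_eq_laplacian hf.differentiableAt_fderiv, lap_eq_laplacian hg.differentiableAt_fderiv]
  exact hf.laplacian_add hg

theorem lap_const_mul (c : ℂ) (hf : ContDiffAt ℝ 2 f x) :
    lap (fun y => c * f y) x = c * lap f x := by
  rw [lap_eq_laplacian (contDiffAt_const.mul hf).differentiableAt_fderiv,
    lap_eq_laplacian hf.differentiableAt_fderiv]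
  exact laplacian_smul c hf

theorem lap_mul (hf : ContDiffAt ℝ 2 f x) (hg : ContDiffAt ℝ 2 g x) :
    lap (fun y => f y * g y) x = f x * lap g x
      + 2 * ∑ i, fderiv ℝ f x (EuclideanSpace.single i 1)
          * fderiv ℝ g x (EuclideanSpace.single i 1)
      + g x * lap f x := by
  simp only [lap, fderiv_fderiv_mul_apply hf hg, Finset.sum_add_distrib, Finset.mul_sum]

theorem ContDiffAt.lap {m k : WithTop ℕ∞} (hf : ContDiffAt ℝ k f x) (hmk : m + 2 ≤ k) :
    ContDiffAt ℝ m (lap f) x := by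
  have hmk' : m + 1 + 1 ≤ k := by rwa [add_assoc, one_add_one_eq_two]
  exact ContDiffAt.sum fun i _ => (hf.fderiv_apply hmk' _).fderiv_apply le_rfl _

theorem ContDiffAt.radialDeriv {m k : WithTop ℕ∞} (hf : ContDiffAt ℝ k f x) (hmk : m + 1 ≤ k) :
    ContDiffAt ℝ m (radialDeriv f) x :=
  (hf.fderiv_right hmk).clm_apply contDiffAt_id

theorem fderiv_radialDeriv_apply (hf : ContDiffAt ℝ 2 f x) (v : E n) :
    fderiv ℝ (radialDeriv f) x v = fderiv ℝ f x v + radialDeriv (fun y => fderiv ℝ f y v) x := by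
  have hsymm := hf.isSymmSndFDerivAt (by simp [minSmoothness_of_isRCLikeNormedField])
  have hrad : radialDeriv f = fun y => fderiv ℝ f y (id y) := rfl
  rw [hrad, fderiv_clm_apply hf.differentiableAt_fderiv differentiableAt_id, radialDeriv,
    fderiv_fderiv_apply hf.differentiableAt_fderiv]
  simp [hsymm v x]

theorem lap_radialDeriv (hf : ContDiffAt ℝ 3 f x) :
    lap (radialDeriv f) x = 2 * lap f x + radialDeriv (lap f) x := by
  have hterm (v : E n) : fderiv ℝ (fun y => fderiv ℝ (radialDeriv f) y v) x v
      = 2 * fderiv ℝ (fun y => fderiv ℝ f y v) x v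
        + radialDeriv (fun y => fderiv ℝ (fun z => fderiv ℝ f z v) y v) x := by
    have hDf : ContDiffAt ℝ 2 (fun y => fderiv ℝ f y v) x := hf.fderiv_apply (by norm_num) v
    have hcomm : (fun y => fderiv ℝ (radialDeriv f) y v) =ᶠ[𝓝 x]
        fun y => fderiv ℝ f y v + radialDeriv (fun z => fderiv ℝ f z v) y := by
      filter_upwards [hf.eventually (by simp)] with y hy
      exact fderiv_radialDeriv_apply (hy.of_le (by norm_num)) v
    rw [hcomm.fderiv_eq, fderiv_fun_add (hDf.differentiableAt two_ne_zero)
      ((hDf.radialDeriv (m := 1) (by norm_num)).differentiableAt one_ne_zero), add_apply,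
      fderiv_radialDeriv_apply hDf]
    ring
  have hlap : radialDeriv (lap f) x = ∑ i, radialDeriv
      (fun y => fderiv ℝ (fun z => fderiv ℝ f z (EuclideanSpace.single i 1)) y
        (EuclideanSpace.single i 1)) x := by
    unfold radialDeriv lap
    rw [fderiv_fun_sum fun i _ => ((hf.fderiv_apply (m := 2) (by norm_num) _).fderiv_apply
      (m := 1) (by norm_num) _).differentiableAt one_ne_zero, sum_apply]
  simp only [lap, hterm, Finset.sum_add_distrib, Finset.mul_sum, hlap]

theorem lap_one_sub_norm_sq : lap (fun y : E n => ((1 - ‖y‖ ^ 2 : ℝ) : ℂ)) x = -2 * n := by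
  have h (v : E n) : fderiv ℝ (fun y => fderiv ℝ (fun z : E n => ((1 - ‖z‖ ^ 2 : ℝ) : ℂ)) y v) x
      = (-2 : ℂ) • Complex.ofRealCLM.comp (innerSL ℝ v) := by
    simp only [fderiv_one_sub_norm_sq_apply]
    exact ((-2 : ℂ) • Complex.ofRealCLM.comp (innerSL ℝ v)).fderiv
  simp only [lap, h]
  simp
  ring

theorem sum_fderiv_one_sub_norm_sq_mul (f : E n → ℂ) (x : E n) :
    ∑ i, fderiv ℝ (fun y : E n => ((1 - ‖y‖ ^ 2 : ℝ) : ℂ)) x (EuclideanSpace.single i 1)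
      * fderiv ℝ f x (EuclideanSpace.single i 1) = -2 * radialDeriv f x := by
  have hx := congrArg (fderiv ℝ f x) ((EuclideanSpace.basisFun (Fin n) ℝ).sum_repr' x)
  simp only [map_sum, map_smul, EuclideanSpace.basisFun_apply] at hx
  simp only [radialDeriv, ← hx, fderiv_one_sub_norm_sq_apply, Finset.mul_sum, Complex.real_smul,
    mul_assoc]

theorem lap_Lop (θ : ℝ) (hf : ContDiffAt ℝ 4 f x) :
    lap (Lop θ f) x = Lop (θ - 1) (lap f) x := by
  set ψ : E n → ℂ := fun y => ((1 - ‖y‖ ^ 2 : ℝ) : ℂ)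
  have hψ : ContDiffAt ℝ 2 ψ x :=
    (Complex.ofRealCLM.contDiff.comp (contDiff_const.sub (contDiff_norm_sq ℝ))).contDiffAt
  have hf₂ : ContDiffAt ℝ 2 f x := hf.of_le (by norm_num)
  have hlap : ContDiffAt ℝ 2 (lap f) x := hf.lap (by norm_num)
  have hrad : ContDiffAt ℝ 2 (radialDeriv f) x := hf.radialDeriv (by norm_num)
  have hLop : Lop θ f = fun y => ψ y * lap f y
      + (((4 * θ : ℝ) : ℂ) * radialDeriv f y + ((2 * θ * ((n : ℝ) - 2 - 2 * θ) : ℝ) : ℂ) * f y) :=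
    funext fun y => add_assoc _ _ _
  rw [hLop, lap_add (hψ.mul hlap) ((contDiffAt_const.mul hrad).add (contDiffAt_const.mul hf₂)),
    lap_add (contDiffAt_const.mul hrad) (contDiffAt_const.mul hf₂), lap_mul hψ hlap,
    lap_const_mul _ hrad, lap_const_mul _ hf₂, sum_fderiv_one_sub_norm_sq_mul,
    lap_one_sub_norm_sq, lap_radialDeriv (hf.of_le (by norm_num))]
  simp only [Lop, ψ]
  push_cast
  ring

theorem lapIter_succ (j : ℕ) (f : E n → ℂ) : lapIter (j + 1) f = lap (lapIter j f) :=
  Function.iterate_succ_apply' _ _ _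

theorem ContDiffOn.lapIter {s : Set (E n)} (hs : IsOpen s) (m j : ℕ)
    (hf : ContDiffOn ℝ (m + 2 * j : ℕ) f s) : ContDiffOn ℝ m (lapIter j f) s := by
  induction j generalizing f with
  | zero => simpa [lapIter] using hf
  | succ j ih =>
    rw [lapIter, Function.iterate_succ_apply]
    refine ih (hs.contDiffOn_iff.mpr fun y hy => (hf.contDiffAt (hs.mem_nhds hy)).lap ?_)
    exact_mod_cast (by omega : m + 2 * j + 2 ≤ m + 2 * (j + 1))

theorem lapIter_Lop (θ : ℝ) {s : Set (E n)} (hs : IsOpen s) (j : ℕ)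
    (hf : ContDiffOn ℝ (2 * j + 2 : ℕ) f s) (hx : x ∈ s) :
    lapIter j (Lop θ f) x = Lop (θ - j) (lapIter j f) x := by
  induction j generalizing x with
  | zero => simp [lapIter]
  | succ j ih =>
    have hf' : ContDiffOn ℝ (2 * j + 2 : ℕ) f s :=
      hf.of_le (by exact_mod_cast (by omega : 2 * j + 2 ≤ 2 * (j + 1) + 2))
    have hiter : ContDiffOn ℝ 4 (lapIter j f) s :=
      ContDiffOn.lapIter hs 4 j (by rwa [show 4 + 2 * j = 2 * (j + 1) + 2 by ring])
    calc lapIter (j + 1) (Lop θ f) x = lap (lapIter j (Lop θ f)) x := by rw [lapIter_succ]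
      _ = lap (Lop (θ - j) (lapIter j f)) x :=
          lap_congr_nhds (eventually_of_mem (hs.mem_nhds hx) fun y hy => ih hf' hy)
      _ = Lop (θ - j - 1) (lap (lapIter j f)) x := lap_Lop _ (hiter.contDiffAt (hs.mem_nhds hx))
      _ = Lop (θ - (j + 1 : ℕ)) (lapIter (j + 1) f) x := by
          rw [lapIter_succ, Nat.cast_succ, sub_add_eq_sub_sub]

end EuclideanLaplacian

theorem stmt6_general (n : ℕ) (θ : ℝ) :
    (∀ u : E n → ℂ, ContDiffOn ℝ 4 u (unitBall n) →
      ∀ x ∈ unitBall n, lap (Lop θ u) x = Lop (θ - 1) (lap u) x) ∧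
    (∀ j : ℕ, 1 ≤ j → ∀ u : E n → ℂ, ContDiffOn ℝ (2 * j + 2 : ℕ) u (unitBall n) →
      ∀ x ∈ unitBall n, lapIter j (Lop θ u) x = Lop (θ - (j : ℝ)) (lapIter j u) x) := by
  have hs : IsOpen (unitBall n) := Metric.isOpen_ball
  exact ⟨fun u hu x hx => lap_Lop θ (hu.contDiffAt (hs.mem_nhds hx)),
    fun j _ u hu x hx => lapIter_Lop θ hs j hu hx⟩

/-- `Δ L_θ = L_{θ-1} Δ` and more generally `Δ^j L_θ = L_{θ-j} Δ^j`. -/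
theorem stmt6 (n : ℕ) (hn : 2 ≤ n) (θ : ℝ) :
    (∀ u : E n → ℂ, ContDiffOn ℝ 4 u (unitBall n) →
      ∀ x ∈ unitBall n, lap (Lop θ u) x = Lop (θ - 1) (lap u) x) ∧
    (∀ j : ℕ, 1 ≤ j → ∀ u : E n → ℂ, ContDiffOn ℝ (2 * j + 2 : ℕ) u (unitBall n) →
      ∀ x ∈ unitBall n, lapIter j (Lop θ u) x = Lop (θ - (j : ℝ)) (lapIter j u) x) :=
  stmt6_general n θ
end
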